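/- arXiv:0809.3438 — 5 statements merged into one kernel-verified Lean document; each statement's English description precedes it below -/
import Mathlib

section
/- Let φ : 𝔻 → 𝔻 be holomorphic. Then the composition operator C_φ is an isometry on the Bloch space of 𝔻 if and only if φ(0) = 0 and β_φ = sup_{z∈𝔻} (1−|z|²)|φ′(z)| = 1. -/
open Complex Metric Set

/-- The set of values `(1-|z|²)|f'(z)|` for `z` in the unit disk. -/
def blochValues (f : ℂ → ℂ) : Set ℝ :=
  {r : ℝ | ∃ z ∈ ball (0 : ℂ) 1, r = (1 - ‖z‖ ^ 2) * ‖deriv f z‖}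

/-- The Bloch seminorm `β_f = sup_{z ∈ 𝔻} (1-|z|²)|f'(z)|`. -/
noncomputable def blochSemi (f : ℂ → ℂ) : ℝ := sSup (blochValues f)

/-- `f` is a Bloch function on the unit disk: it is holomorphic there and its
Bloch seminorm is finite. -/
def IsBlochFn (f : ℂ → ℂ) : Prop :=
  DifferentiableOn ℂ f (ball (0 : ℂ) 1) ∧ BddAbove (blochValues f)

/-- The Bloch norm `‖f‖_B = |f(0)| + β_f`. -/
noncomputable def blochNorm (f : ℂ → ℂ) : ℝ := ‖f 0‖ + blochSemi f

/-- The composition operator `C_φ` is an isometry on the Bloch space of `𝔻`. -/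
def IsIsometryCompOp (φ : ℂ → ℂ) : Prop :=
  ∀ f : ℂ → ℂ, IsBlochFn f → IsBlochFn (f ∘ φ) ∧ blochNorm (f ∘ φ) = blochNorm f

/-! By Schwarz–Pick, `(1 - |z|²)|φ'(z)| ≤ 1 - |φ(z)|²`, so `β_{f ∘ φ} ≤ β_f` for every `f` and
`β_φ ≤ 1`. Testing an isometry on `f = id` and on `f = σ_{φ(0)}`, where the disk automorphism
`σ_a(z) = (a - z) / (1 - ā z)` exchanges `a` and `0`, forces `φ(0) = 0` and `β_φ = 1`.

Conversely, let `β_φ = 1` and pick `z_n` with `(1 - |z_n|²)|φ'(z_n)| → 1`; then `φ(z_n) → 0`. The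
recentred maps `σ_{φ(z_n)} ∘ φ ∘ σ_{z_n}` fix `0` and have derivative of modulus tending to `1`
there, so by the rigidity of Schwarz's lemma they are uniformly close to rotations, together with
their derivatives, on every smaller disk. Hence for each `a ∈ 𝔻` there are `w_n` with `φ(w_n) → a`
and hyperbolic derivative `(1 - |w_n|²)|φ'(w_n)| / (1 - |φ(w_n)|²) → 1`, and passing to the limit
in `(1 - |w_n|²)|(f ∘ φ)'(w_n)| ≤ β_{f ∘ φ}` gives `(1 - |a|²)|f'(a)| ≤ β_{f ∘ φ}`. -/

open Filter Topology ComplexConjugate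

noncomputable def mobius (a z : ℂ) : ℂ := (a - z) / (1 - conj a * z)

section Mobius

variable {a z : ℂ}

@[simp] lemma mobius_zero_right (a : ℂ) : mobius a 0 = a := by simp [mobius]

@[simp] lemma mobius_self (a : ℂ) : mobius a a = 0 := by simp [mobius]

lemma sq_norm_one_sub_conj_mul_sub_sq_norm_sub (a z : ℂ) :
    ‖1 - conj a * z‖ ^ 2 - ‖a - z‖ ^ 2 = (1 - ‖a‖ ^ 2) * (1 - ‖z‖ ^ 2) := by
  simp only [Complex.sq_norm, Complex.normSq_apply, Complex.sub_re, Complex.sub_im,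
    Complex.mul_re, Complex.mul_im, Complex.one_re, Complex.one_im, Complex.conj_re,
    Complex.conj_im]
  ring

lemma norm_one_sub_conj_mul_le (ha : ‖a‖ ≤ 1) (x : ℂ) :
    ‖1 - conj a * x‖ ≤ (1 - ‖a‖ ^ 2) + ‖a - x‖ := by
  have hsplit : 1 - conj a * x = ((1 - ‖a‖ ^ 2 : ℝ) : ℂ) + conj a * (a - x) := by
    push_cast
    rw [mul_sub, ← Complex.normSq_eq_conj_mul_self, Complex.normSq_eq_norm_sq]
    push_cast
    ring
  calc ‖1 - conj a * x‖ ≤ ‖((1 - ‖a‖ ^ 2 : ℝ) : ℂ)‖ + ‖conj a * (a - x)‖ :=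
        hsplit ▸ norm_add_le _ _
    _ ≤ (1 - ‖a‖ ^ 2) + ‖a - x‖ := by
        rw [Complex.norm_real, Real.norm_of_nonneg (by nlinarith [norm_nonneg a]), norm_mul,
          RCLike.norm_conj]
        gcongr
        exact mul_le_of_le_one_left (norm_nonneg _) ha

lemma one_sub_conj_mul_ne_zero (ha : ‖a‖ < 1) (hz : ‖z‖ ≤ 1) : 1 - conj a * z ≠ 0 := by
  rw [sub_ne_zero]
  intro h
  have : ‖conj a * z‖ < 1 := by
    rw [norm_mul, RCLike.norm_conj]
    nlinarith [norm_nonneg a, norm_nonneg z]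
  simp [← h] at this

lemma one_sub_sq_norm_mobius (ha : ‖a‖ < 1) (hz : ‖z‖ ≤ 1) :
    1 - ‖mobius a z‖ ^ 2 = (1 - ‖a‖ ^ 2) * (1 - ‖z‖ ^ 2) / ‖1 - conj a * z‖ ^ 2 := by
  have hd : ‖1 - conj a * z‖ ^ 2 ≠ 0 := by
    simpa using one_sub_conj_mul_ne_zero ha hz
  rw [mobius, norm_div, div_pow, eq_div_iff hd, sub_mul, div_mul_cancel₀ _ hd,
    ← sq_norm_one_sub_conj_mul_sub_sq_norm_sub, one_mul]

lemma norm_mobius_le_one (ha : ‖a‖ < 1) (hz : ‖z‖ ≤ 1) : ‖mobius a z‖ ≤ 1 := by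
  have h := one_sub_sq_norm_mobius ha hz
  have : 0 ≤ 1 - ‖mobius a z‖ ^ 2 := by
    rw [h]
    have : 0 ≤ 1 - ‖a‖ ^ 2 := by nlinarith [norm_nonneg a]
    have : 0 ≤ 1 - ‖z‖ ^ 2 := by nlinarith [norm_nonneg z]
    positivity
  nlinarith [norm_nonneg (mobius a z)]

lemma norm_mobius_lt_one (ha : ‖a‖ < 1) (hz : ‖z‖ < 1) : ‖mobius a z‖ < 1 := by
  have h := one_sub_sq_norm_mobius ha hz.le
  have : 0 < 1 - ‖mobius a z‖ ^ 2 := by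
    rw [h]
    have : 0 < 1 - ‖a‖ ^ 2 := by nlinarith [norm_nonneg a]
    have : 0 < 1 - ‖z‖ ^ 2 := by nlinarith [norm_nonneg z]
    have := one_sub_conj_mul_ne_zero ha hz.le
    positivity
  nlinarith [norm_nonneg (mobius a z)]

lemma mobius_mobius (ha : ‖a‖ < 1) (hz : ‖z‖ < 1) : mobius a (mobius a z) = z := by
  have hd := one_sub_conj_mul_ne_zero ha hz.le
  have hd' := one_sub_conj_mul_ne_zero ha (norm_mobius_lt_one ha hz).le
  have hd'' : 1 - z * conj a ≠ 0 := by rwa [mul_comm]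
  have haa : 1 - conj a * a ≠ 0 := one_sub_conj_mul_ne_zero ha ha.le
  simp only [mobius] at hd' ⊢
  rw [div_eq_iff hd']
  field_simp
  ring

lemma hasDerivAt_mobius (ha : ‖a‖ < 1) (hz : ‖z‖ ≤ 1) :
    HasDerivAt (mobius a) (((‖a‖ ^ 2 - 1 : ℝ) : ℂ) / (1 - conj a * z) ^ 2) z := by
  have hd := one_sub_conj_mul_ne_zero ha hz
  refine (((hasDerivAt_id z).const_sub a).div
    (((hasDerivAt_id z).const_mul (conj a)).const_sub 1) hd).congr_deriv ?_
  rw [← Complex.normSq_eq_norm_sq]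
  push_cast
  rw [Complex.normSq_eq_conj_mul_self]
  simp only [id]
  ring

lemma differentiableAt_mobius (ha : ‖a‖ < 1) (hz : ‖z‖ ≤ 1) :
    DifferentiableAt ℂ (mobius a) z :=
  (hasDerivAt_mobius ha hz).differentiableAt

lemma one_sub_sq_norm_mul_norm_deriv_mobius (ha : ‖a‖ < 1) (hz : ‖z‖ < 1) :
    (1 - ‖z‖ ^ 2) * ‖deriv (mobius a) z‖ = 1 - ‖mobius a z‖ ^ 2 := by
  rw [(hasDerivAt_mobius ha hz.le).deriv, one_sub_sq_norm_mobius ha hz.le, norm_div, norm_pow,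
    Complex.norm_real, Real.norm_of_nonpos (by nlinarith [norm_nonneg a])]
  ring

lemma tendsto_mobius {ι : Type*} {l : Filter ι} {c x : ι → ℂ} {x₀ : ℂ}
    (hc : Tendsto c l (𝓝 0)) (hx : Tendsto x l (𝓝 x₀)) :
    Tendsto (fun i => mobius (c i) (x i)) l (𝓝 (-x₀)) := by
  have hconj : Tendsto (fun i => conj (c i)) l (𝓝 0) := by
    simpa [Function.comp_def] using (Complex.continuous_conj.tendsto 0).comp hc
  simpa [mobius, Pi.div_def] using (hc.sub hx).div (tendsto_const_nhds.sub (hconj.mul hx))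
    (by simp : (1 : ℂ) - 0 * x₀ ≠ 0)

end Mobius

def IsDiskSelfMap (φ : ℂ → ℂ) : Prop :=
  DifferentiableOn ℂ φ (ball 0 1) ∧ MapsTo φ (ball 0 1) (ball 0 1)

noncomputable def hypDeriv (φ : ℂ → ℂ) (z : ℂ) : ℝ :=
  (1 - ‖z‖ ^ 2) * ‖deriv φ z‖ / (1 - ‖φ z‖ ^ 2)

noncomputable def recenter (φ : ℂ → ℂ) (a : ℂ) : ℂ → ℂ :=
  mobius (φ a) ∘ φ ∘ mobius a

namespace IsDiskSelfMap

variable {φ ψ : ℂ → ℂ} {z : ℂ}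

lemma norm_lt_one (hφ : IsDiskSelfMap φ) (hz : ‖z‖ < 1) : ‖φ z‖ < 1 :=
  mem_ball_zero_iff.mp (hφ.2 (mem_ball_zero_iff.mpr hz))

lemma differentiableAt (hφ : IsDiskSelfMap φ) (hz : ‖z‖ < 1) : DifferentiableAt ℂ φ z :=
  hφ.1.differentiableAt (isOpen_ball.mem_nhds (mem_ball_zero_iff.mpr hz))

lemma comp (hφ : IsDiskSelfMap φ) (hψ : IsDiskSelfMap ψ) : IsDiskSelfMap (φ ∘ ψ) :=
  ⟨hφ.1.comp hψ.1 hψ.2, hφ.2.comp hψ.2⟩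

lemma one_sub_sq_norm_pos (hφ : IsDiskSelfMap φ) (hz : ‖z‖ < 1) : 0 < 1 - ‖φ z‖ ^ 2 := by
  nlinarith [hφ.norm_lt_one hz, norm_nonneg (φ z)]

end IsDiskSelfMap

lemma isDiskSelfMap_id : IsDiskSelfMap id := ⟨differentiableOn_id, mapsTo_id _⟩

lemma isDiskSelfMap_mobius {a : ℂ} (ha : ‖a‖ < 1) : IsDiskSelfMap (mobius a) :=
  ⟨fun _ hz => (differentiableAt_mobius ha (mem_ball_zero_iff.mp hz).le).differentiableWithinAt,
    fun _ hz => mem_ball_zero_iff.mpr (norm_mobius_lt_one ha (mem_ball_zero_iff.mp hz))⟩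

lemma isDiskSelfMap_recenter {φ : ℂ → ℂ} {a : ℂ} (hφ : IsDiskSelfMap φ) (ha : ‖a‖ < 1) :
    IsDiskSelfMap (recenter φ a) :=
  (isDiskSelfMap_mobius (hφ.norm_lt_one ha)).comp (hφ.comp (isDiskSelfMap_mobius ha))

@[simp] lemma recenter_apply_zero (φ : ℂ → ℂ) (a : ℂ) : recenter φ a 0 = 0 := by
  simp [recenter]

lemma hypDeriv_zero_of_apply_zero {ψ : ℂ → ℂ} (h0 : ψ 0 = 0) : hypDeriv ψ 0 = ‖deriv ψ 0‖ := by
  simp [hypDeriv, h0]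

-- Both Möbius factors multiply `1 - ‖·‖²` by the modulus of their derivative, which cancels.
lemma IsDiskSelfMap.hypDeriv_recenter {φ : ℂ → ℂ} {a u : ℂ} (hφ : IsDiskSelfMap φ)
    (ha : ‖a‖ < 1) (hu : ‖u‖ < 1) :
    hypDeriv (recenter φ a) u = hypDeriv φ (mobius a u) := by
  set w := mobius a u
  have hw : ‖w‖ < 1 := norm_mobius_lt_one ha hu
  have hb : ‖φ a‖ < 1 := hφ.norm_lt_one ha
  have hchain : deriv (recenter φ a) u =
      deriv (mobius (φ a)) (φ w) * (deriv φ w * deriv (mobius a) u) := by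
    rw [recenter, deriv_comp u (differentiableAt_mobius hb (hφ.norm_lt_one hw).le)
      ((hφ.differentiableAt hw).comp u (differentiableAt_mobius ha hu.le)),
      deriv_comp u (hφ.differentiableAt hw) (differentiableAt_mobius ha hu.le)]
    rfl
  have hinner := one_sub_sq_norm_mul_norm_deriv_mobius ha hu
  have houter := one_sub_sq_norm_mul_norm_deriv_mobius hb (hφ.norm_lt_one hw)
  have hpos : 0 < ‖deriv (mobius (φ a)) (φ w)‖ := by
    have := (isDiskSelfMap_mobius hb).one_sub_sq_norm_pos (hφ.norm_lt_one hw)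
    rw [← houter] at this
    exact pos_of_mul_pos_right this (hφ.one_sub_sq_norm_pos hw).le
  have hv := hφ.one_sub_sq_norm_pos hw
  simp only [hypDeriv, hchain, norm_mul]
  rw [show recenter φ a u = mobius (φ a) (φ w) from rfl, ← houter, ← hinner]
  field_simp

lemma IsDiskSelfMap.hypDeriv_le_one {φ : ℂ → ℂ} {z : ℂ} (hφ : IsDiskSelfMap φ) (hz : ‖z‖ < 1) :
    hypDeriv φ z ≤ 1 := by
  have hψ := isDiskSelfMap_recenter hφ hz
  rw [← mobius_zero_right z, ← hφ.hypDeriv_recenter hz (by simp),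
    hypDeriv_zero_of_apply_zero (recenter_apply_zero φ z)]
  exact Complex.norm_deriv_le_one_of_mapsTo_ball hψ.1
    (by simpa using hψ.2.mono_right ball_subset_closedBall) one_pos

lemma IsDiskSelfMap.one_sub_sq_norm_mul_norm_deriv_le {φ : ℂ → ℂ} {z : ℂ} (hφ : IsDiskSelfMap φ)
    (hz : ‖z‖ < 1) : (1 - ‖z‖ ^ 2) * ‖deriv φ z‖ ≤ 1 - ‖φ z‖ ^ 2 :=
  (div_le_one (hφ.one_sub_sq_norm_pos hz)).mp (hφ.hypDeriv_le_one hz)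

section Bloch

variable {f φ : ℂ → ℂ} {z : ℂ}

lemma blochValues_nonempty (f : ℂ → ℂ) : (blochValues f).Nonempty :=
  ⟨_, 0, mem_ball_self one_pos, rfl⟩

lemma le_blochSemi (hf : BddAbove (blochValues f)) (hz : ‖z‖ < 1) :
    (1 - ‖z‖ ^ 2) * ‖deriv f z‖ ≤ blochSemi f :=
  le_csSup hf ⟨z, mem_ball_zero_iff.mpr hz, rfl⟩

lemma bddAbove_blochValues {C : ℝ} (h : ∀ z, ‖z‖ < 1 → (1 - ‖z‖ ^ 2) * ‖deriv f z‖ ≤ C) :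
    BddAbove (blochValues f) :=
  ⟨C, by rintro _ ⟨z, hz, rfl⟩; exact h z (mem_ball_zero_iff.mp hz)⟩

lemma blochSemi_le {C : ℝ} (h : ∀ z, ‖z‖ < 1 → (1 - ‖z‖ ^ 2) * ‖deriv f z‖ ≤ C) :
    blochSemi f ≤ C :=
  csSup_le (blochValues_nonempty f) (by rintro _ ⟨z, hz, rfl⟩; exact h z (mem_ball_zero_iff.mp hz))

lemma IsDiskSelfMap.one_sub_sq_norm_mul_norm_deriv_le_one (hφ : IsDiskSelfMap φ)
    (hz : ‖z‖ < 1) : (1 - ‖z‖ ^ 2) * ‖deriv φ z‖ ≤ 1 :=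
  (hφ.one_sub_sq_norm_mul_norm_deriv_le hz).trans (by nlinarith [norm_nonneg (φ z)])

lemma IsDiskSelfMap.isBlochFn (hφ : IsDiskSelfMap φ) : IsBlochFn φ :=
  ⟨hφ.1, bddAbove_blochValues fun _ => hφ.one_sub_sq_norm_mul_norm_deriv_le_one⟩

lemma IsDiskSelfMap.blochSemi_le_one (hφ : IsDiskSelfMap φ) : blochSemi φ ≤ 1 :=
  blochSemi_le fun _ => hφ.one_sub_sq_norm_mul_norm_deriv_le_one

lemma blochSemi_id : blochSemi id = 1 :=
  le_antisymm isDiskSelfMap_id.blochSemi_le_one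
    (by simpa using le_blochSemi isDiskSelfMap_id.isBlochFn.2 (z := 0) (by simp))

lemma blochSemi_mobius {a : ℂ} (ha : ‖a‖ < 1) : blochSemi (mobius a) = 1 :=
  le_antisymm (isDiskSelfMap_mobius ha).blochSemi_le_one <| by
    simpa [one_sub_sq_norm_mul_norm_deriv_mobius ha ha] using
      le_blochSemi (isDiskSelfMap_mobius ha).isBlochFn.2 ha

lemma IsDiskSelfMap.one_sub_sq_norm_mul_norm_deriv_comp (hφ : IsDiskSelfMap φ)
    (hf : DifferentiableOn ℂ f (ball 0 1)) (hz : ‖z‖ < 1) :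
    (1 - ‖z‖ ^ 2) * ‖deriv (f ∘ φ) z‖ =
      hypDeriv φ z * ((1 - ‖φ z‖ ^ 2) * ‖deriv f (φ z)‖) := by
  have hfφ : DifferentiableAt ℂ f (φ z) :=
    hf.differentiableAt (isOpen_ball.mem_nhds (mem_ball_zero_iff.mpr (hφ.norm_lt_one hz)))
  rw [deriv_comp z hfφ (hφ.differentiableAt hz), norm_mul, hypDeriv]
  field_simp [(hφ.one_sub_sq_norm_pos hz).ne']

lemma IsDiskSelfMap.isBlochFn_comp (hφ : IsDiskSelfMap φ) (hf : IsBlochFn f) :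
    IsBlochFn (f ∘ φ) ∧ blochSemi (f ∘ φ) ≤ blochSemi f := by
  have hle : ∀ z, ‖z‖ < 1 → (1 - ‖z‖ ^ 2) * ‖deriv (f ∘ φ) z‖ ≤ blochSemi f := fun z hz => by
    rw [hφ.one_sub_sq_norm_mul_norm_deriv_comp hf.1 hz]
    exact (mul_le_of_le_one_left (mul_nonneg (hφ.one_sub_sq_norm_pos hz).le (norm_nonneg _))
      (hφ.hypDeriv_le_one hz)).trans (le_blochSemi hf.2 (hφ.norm_lt_one hz))
  exact ⟨⟨hf.1.comp hφ.1 hφ.2, bddAbove_blochValues hle⟩, blochSemi_le hle⟩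

end Bloch

lemma norm_sub_apply_zero_mul_le {g : ℂ → ℂ} (hg : DifferentiableOn ℂ g (ball 0 1))
    (hmap : MapsTo g (ball 0 1) (closedBall 0 1)) {w : ℂ} (hw : ‖w‖ < 1) :
    ‖g w - g 0‖ * (1 - ‖w‖) ≤ ‖w‖ * (1 - ‖g 0‖ ^ 2) := by
  have hle : ∀ z ∈ ball (0 : ℂ) 1, ‖g z‖ ≤ 1 := fun z hz => mem_closedBall_zero_iff.mp (hmap hz)
  have hw' : w ∈ ball (0 : ℂ) 1 := mem_ball_zero_iff.mpr hw
  rcases (hle 0 (mem_ball_self one_pos)).lt_or_eq with hlt | heq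
  · set c := g 0
    have hden : 1 - conj c * g w ≠ 0 := one_sub_conj_mul_ne_zero hlt (hle w hw')
    have hschwarz : ‖mobius c (g w)‖ ≤ ‖w‖ :=
      Complex.norm_le_norm_of_mapsTo_ball (f := mobius c ∘ g)
        (fun z hz =>
          (differentiableAt_mobius hlt (hle z hz)).comp_differentiableWithinAt z (hg z hz))
        (fun z hz => mem_closedBall_zero_iff.mpr (norm_mobius_le_one hlt (hle z hz)))
        (by simp [c]) hw
    have hsplit : ‖c - g w‖ = ‖mobius c (g w)‖ * ‖1 - conj c * g w‖ := by
      rw [mobius, norm_div, div_mul_cancel₀ _ (norm_ne_zero_iff.mpr hden)]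
    have hbound := norm_one_sub_conj_mul_le hlt.le (g w)
    have : ‖c - g w‖ ≤ ‖w‖ * ((1 - ‖c‖ ^ 2) + ‖c - g w‖) :=
      hsplit.trans_le (mul_le_mul hschwarz hbound (norm_nonneg _) (norm_nonneg _))
    rw [norm_sub_rev]
    linarith
  · have hconst := Complex.eqOn_of_isPreconnected_of_isMaxOn_norm
      (convex_ball (0 : ℂ) 1).isPreconnected isOpen_ball hg (mem_ball_self one_pos)
      (fun z hz => by simpa [← heq] using hle z hz)
    rw [hconst hw', Function.const_apply, sub_self, norm_zero, zero_mul, heq]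
    simp

section Rigidity

variable {ψ : ℂ → ℂ} {u w : ℂ}

lemma IsDiskSelfMap.norm_sub_deriv_zero_mul_mul_le (hψ : IsDiskSelfMap ψ) (h0 : ψ 0 = 0)
    (hw : ‖w‖ < 1) : ‖ψ w - deriv ψ 0 * w‖ * (1 - ‖w‖) ≤ 1 - ‖deriv ψ 0‖ ^ 2 := by
  have hmaps : MapsTo (dslope ψ 0) (ball 0 1) (closedBall 0 1) := fun z hz =>
    mem_closedBall_zero_iff.mpr <| by
      simpa using Complex.norm_dslope_le_div_of_mapsTo_ball hψ.1
        (by simpa [h0] using hψ.2.mono_right ball_subset_closedBall) hz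
  have hrigid := norm_sub_apply_zero_mul_le
    ((Complex.differentiableOn_dslope (ball_mem_nhds 0 one_pos)).mpr hψ.1) hmaps hw
  have hlam : ‖deriv ψ 0‖ ≤ 1 := by
    simpa using mem_closedBall_zero_iff.mp (hmaps (mem_ball_self one_pos))
  have hψw : ψ w = w * dslope ψ 0 w := by simpa [h0] using (sub_smul_dslope ψ 0 w).symm
  rw [dslope_same] at hrigid
  calc ‖ψ w - deriv ψ 0 * w‖ * (1 - ‖w‖) = ‖w‖ * (‖dslope ψ 0 w - deriv ψ 0‖ * (1 - ‖w‖)) := by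
        rw [hψw, mul_comm (deriv ψ 0), ← mul_sub, norm_mul]; ring
    _ ≤ ‖w‖ * (‖w‖ * (1 - ‖deriv ψ 0‖ ^ 2)) := by gcongr
    _ ≤ 1 - ‖deriv ψ 0‖ ^ 2 := by
        have : 0 ≤ 1 - ‖deriv ψ 0‖ ^ 2 := by nlinarith [norm_nonneg (deriv ψ 0)]
        nlinarith [norm_nonneg w, mul_le_one₀ hw.le (norm_nonneg w) hw.le]

lemma IsDiskSelfMap.norm_deriv_sub_deriv_zero_le (hψ : IsDiskSelfMap ψ) (h0 : ψ 0 = 0) {s : ℝ}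
    (hs : s < 1) (hu : ‖u‖ ≤ s) :
    ‖deriv ψ u - deriv ψ 0‖ ≤ 4 * (1 - ‖deriv ψ 0‖ ^ 2) / (1 - s) ^ 2 := by
  set r := (1 - s) / 2
  have hr : 0 < r := by simp only [r]; linarith
  have hnear : ∀ z ∈ closedBall u r, ‖z‖ ≤ 1 - r := fun z hz => by
    have := norm_le_norm_add_norm_sub' z u
    rw [mem_closedBall, dist_eq_norm] at hz
    simp only [r] at hz ⊢
    linarith
  have hsub : closedBall u r ⊆ ball 0 1 := fun z hz =>
    mem_ball_zero_iff.mpr ((hnear z hz).trans_lt (by linarith))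
  have hg : DifferentiableOn ℂ (fun z => ψ z - deriv ψ 0 * z) (ball 0 1) :=
    hψ.1.sub (differentiableOn_id.const_mul _)
  have hbound : ∀ z ∈ sphere u r, ‖ψ z - deriv ψ 0 * z‖ ≤ (1 - ‖deriv ψ 0‖ ^ 2) / r := by
    intro z hz
    have hz' := hnear z (sphere_subset_closedBall hz)
    rw [le_div_iff₀ hr]
    calc ‖ψ z - deriv ψ 0 * z‖ * r ≤ ‖ψ z - deriv ψ 0 * z‖ * (1 - ‖z‖) := by gcongr; linarith
      _ ≤ _ := hψ.norm_sub_deriv_zero_mul_mul_le h0 (by linarith)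
  have hderiv : deriv (fun z => ψ z - deriv ψ 0 * z) u = deriv ψ u - deriv ψ 0 := by
    have hu' : ‖u‖ < 1 := by linarith
    simpa [Pi.sub_def] using ((hψ.differentiableAt hu').hasDerivAt.sub
      ((hasDerivAt_id u).const_mul (deriv ψ 0))).deriv
  have := Complex.norm_deriv_le_of_forall_mem_sphere_norm_le hr (hg.diffContOnCl_ball hsub) hbound
  rw [hderiv] at this
  convert this using 1
  simp only [r]
  field_simp
  ring

end Rigidity

lemma tendsto_sub_deriv_zero_of_tendsto_norm_deriv_zero {ι : Type*} {l : Filter ι}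
    {ψ : ι → ℂ → ℂ} (hψ : ∀ i, IsDiskSelfMap (ψ i)) (h0 : ∀ i, ψ i 0 = 0)
    (hlam : Tendsto (fun i => ‖deriv (ψ i) 0‖) l (𝓝 1)) {u : ι → ℂ} {s : ℝ} (hs : s < 1)
    (hu : ∀ i, ‖u i‖ ≤ s) :
    Tendsto (fun i => ψ i (u i) - deriv (ψ i) 0 * u i) l (𝓝 0) ∧
      Tendsto (fun i => deriv (ψ i) (u i) - deriv (ψ i) 0) l (𝓝 0) := by
  have hdefect : Tendsto (fun i => 1 - ‖deriv (ψ i) 0‖ ^ 2) l (𝓝 0) := by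
    simpa using (tendsto_const_nhds (x := (1 : ℝ))).sub (hlam.pow 2)
  refine ⟨squeeze_zero_norm (fun i => ?_) (by simpa using hdefect.div_const (1 - s)),
    squeeze_zero_norm (fun i => (hψ i).norm_deriv_sub_deriv_zero_le (h0 i) hs (hu i))
      (by simpa using (hdefect.const_mul 4).div_const ((1 - s) ^ 2))⟩
  rw [le_div_iff₀ (by linarith)]
  calc _ ≤ ‖ψ i (u i) - deriv (ψ i) 0 * u i‖ * (1 - ‖u i‖) := by gcongr; exact hu i
    _ ≤ _ := (hψ i).norm_sub_deriv_zero_mul_mul_le (h0 i) ((hu i).trans_lt hs)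

lemma exists_tendsto_apply_and_tendsto_hypDeriv_one {ι : Type*} {l : Filter ι}
    {ψ : ι → ℂ → ℂ} (hψ : ∀ i, IsDiskSelfMap (ψ i)) (h0 : ∀ i, ψ i 0 = 0)
    (hlam : Tendsto (fun i => ‖deriv (ψ i) 0‖) l (𝓝 1)) {a : ℂ} (ha : ‖a‖ < 1) :
    ∃ u : ι → ℂ, (∀ i, ‖u i‖ < 1) ∧ Tendsto (fun i => ψ i (u i)) l (𝓝 a) ∧
      Tendsto (fun i => hypDeriv (ψ i) (u i)) l (𝓝 1) := by
  have hlam_le : ∀ i, ‖deriv (ψ i) 0‖ ≤ 1 := fun i => by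
    simpa [hypDeriv_zero_of_apply_zero (h0 i)] using (hψ i).hypDeriv_le_one (z := 0) (by simp)
  -- `ψ i` is close to `z ↦ deriv (ψ i) 0 * z`, which sends `u i` to `‖deriv (ψ i) 0‖² a`.
  set u := fun i => a * conj (deriv (ψ i) 0) with hu_def
  have hu : ∀ i, ‖u i‖ ≤ ‖a‖ := fun i => by
    simpa [u] using mul_le_of_le_one_right (norm_nonneg a) (hlam_le i)
  obtain ⟨hval, hderiv⟩ := tendsto_sub_deriv_zero_of_tendsto_norm_deriv_zero hψ h0 hlam ha hu
  have hlin : Tendsto (fun i => deriv (ψ i) 0 * u i) l (𝓝 a) := by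
    have := (tendsto_const_nhds (x := a)).mul
      (Complex.continuous_ofReal.continuousAt.tendsto.comp (hlam.pow 2))
    simp only [Function.comp_apply, one_pow, Complex.ofReal_one, mul_one] at this
    refine this.congr fun i => ?_
    rw [← Complex.normSq_eq_norm_sq, Complex.normSq_eq_conj_mul_self, hu_def]
    ring
  have hψu : Tendsto (fun i => ψ i (u i)) l (𝓝 a) := by simpa using hval.add hlin
  have hnorm_u : Tendsto (fun i => ‖u i‖) l (𝓝 ‖a‖) := by
    simpa [u] using hlam.const_mul ‖a‖
  have hnorm_deriv : Tendsto (fun i => ‖deriv (ψ i) (u i)‖) l (𝓝 1) := by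
    have : Tendsto (fun i => ‖deriv (ψ i) (u i)‖ - ‖deriv (ψ i) 0‖) l (𝓝 0) :=
      squeeze_zero_norm (fun i => (abs_norm_sub_norm_le _ _).trans_eq' (Real.norm_eq_abs _))
        (by simpa using hderiv.norm)
    simpa using this.add hlam
  have hne : 1 - ‖a‖ ^ 2 ≠ 0 := by nlinarith [norm_nonneg a]
  refine ⟨u, fun i => (hu i).trans_lt ha, hψu, ?_⟩
  have := (((tendsto_const_nhds (x := (1 : ℝ))).sub (hnorm_u.pow 2)).mul hnorm_deriv).div
    ((tendsto_const_nhds (x := (1 : ℝ))).sub (hψu.norm.pow 2)) hne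
  rwa [mul_one, div_self hne] at this

lemma IsDiskSelfMap.exists_seq_tendsto_zero_and_tendsto_hypDeriv_one {φ : ℂ → ℂ}
    (hφ : IsDiskSelfMap φ) (hβ : blochSemi φ = 1) :
    ∃ z : ℕ → ℂ, (∀ n, ‖z n‖ < 1) ∧ Tendsto (fun n => φ (z n)) atTop (𝓝 0) ∧
      Tendsto (fun n => hypDeriv φ (z n)) atTop (𝓝 1) := by
  obtain ⟨t, -, ht, hmem⟩ := exists_seq_tendsto_sSup (blochValues_nonempty φ) hφ.isBlochFn.2
  change Tendsto t atTop (𝓝 (blochSemi φ)) at ht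
  rw [hβ] at ht
  choose z hz hzt using hmem
  replace hz := fun n => mem_ball_zero_iff.mp (hz n)
  have hschwarz_pick : ∀ n, t n ≤ 1 - ‖φ (z n)‖ ^ 2 := fun n =>
    (hzt n).trans_le (hφ.one_sub_sq_norm_mul_norm_deriv_le (hz n))
  refine ⟨z, hz, squeeze_zero_norm (fun n => ?_)
      (by simpa using ((tendsto_const_nhds (x := (1 : ℝ))).sub ht).sqrt),
    tendsto_of_tendsto_of_tendsto_of_le_of_le ht tendsto_const_nhds (fun n => ?_)
      (fun n => hφ.hypDeriv_le_one (hz n))⟩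
  · simpa using Real.abs_le_sqrt (by linarith [hschwarz_pick n] : ‖φ (z n)‖ ^ 2 ≤ 1 - t n)
  · have ht0 : 0 ≤ t n := by
      rw [hzt n]
      exact mul_nonneg (by nlinarith [hz n, norm_nonneg (z n)]) (norm_nonneg _)
    rw [hypDeriv, ← hzt n]
    exact le_div_self ht0 (hφ.one_sub_sq_norm_pos (hz n)) (by nlinarith [norm_nonneg (φ (z n))])

lemma IsDiskSelfMap.exists_seq_tendsto_and_tendsto_hypDeriv_one {φ : ℂ → ℂ}
    (hφ : IsDiskSelfMap φ) (hβ : blochSemi φ = 1) {a : ℂ} (ha : ‖a‖ < 1) :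
    ∃ w : ℕ → ℂ, (∀ n, ‖w n‖ < 1) ∧ Tendsto (fun n => φ (w n)) atTop (𝓝 a) ∧
      Tendsto (fun n => hypDeriv φ (w n)) atTop (𝓝 1) := by
  obtain ⟨z, hz, hφz, hhyp⟩ := hφ.exists_seq_tendsto_zero_and_tendsto_hypDeriv_one hβ
  have hlam : Tendsto (fun n => ‖deriv (recenter φ (z n)) 0‖) atTop (𝓝 1) :=
    hhyp.congr fun n => by
      rw [← hypDeriv_zero_of_apply_zero (recenter_apply_zero φ (z n)),
        hφ.hypDeriv_recenter (hz n) (by simp), mobius_zero_right]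
  obtain ⟨u, hu, hψu, hhypu⟩ := exists_tendsto_apply_and_tendsto_hypDeriv_one
    (fun n => isDiskSelfMap_recenter hφ (hz n)) (fun n => recenter_apply_zero φ (z n)) hlam
    (a := -a) (by simpa using ha)
  refine ⟨fun n => mobius (z n) (u n), fun n => norm_mobius_lt_one (hz n) (hu n), ?_,
    hhypu.congr fun n => hφ.hypDeriv_recenter (hz n) (hu n)⟩
  refine (by simpa using tendsto_mobius hφz hψu : Tendsto _ atTop (𝓝 a)).congr fun n => ?_
  exact mobius_mobius (hφ.norm_lt_one (hz n)) (hφ.norm_lt_one (norm_mobius_lt_one (hz n) (hu n)))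

lemma IsDiskSelfMap.blochSemi_le_blochSemi_comp {φ f : ℂ → ℂ} (hφ : IsDiskSelfMap φ)
    (hβ : blochSemi φ = 1) (hf : IsBlochFn f) : blochSemi f ≤ blochSemi (f ∘ φ) := by
  refine blochSemi_le fun a ha => ?_
  obtain ⟨w, hw, hφw, hhyp⟩ := hφ.exists_seq_tendsto_and_tendsto_hypDeriv_one hβ ha
  have hcont : ContinuousAt (fun x => (1 - ‖x‖ ^ 2) * ‖deriv f x‖) a :=
    (continuous_const.sub (continuous_norm.pow 2)).continuousAt.mul
      ((hf.1.deriv isOpen_ball).continuousOn.continuousAt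
        (isOpen_ball.mem_nhds (mem_ball_zero_iff.mpr ha))).norm
  have hlim : Tendsto (fun n => (1 - ‖w n‖ ^ 2) * ‖deriv (f ∘ φ) (w n)‖) atTop
      (𝓝 ((1 - ‖a‖ ^ 2) * ‖deriv f a‖)) := by
    simpa [hφ.one_sub_sq_norm_mul_norm_deriv_comp hf.1 (hw _)] using
      hhyp.mul (hcont.tendsto.comp hφw)
  exact le_of_tendsto' hlim fun n => le_blochSemi (hφ.isBlochFn_comp hf).1.2 (hw n)

lemma IsDiskSelfMap.isIsometryCompOp {φ : ℂ → ℂ} (hφ : IsDiskSelfMap φ) (h0 : φ 0 = 0)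
    (hβ : blochSemi φ = 1) : IsIsometryCompOp φ := fun f hf => by
  obtain ⟨hfφ, hle⟩ := hφ.isBlochFn_comp hf
  refine ⟨hfφ, ?_⟩
  rw [blochNorm, blochNorm, Function.comp_apply, h0,
    le_antisymm hle (hφ.blochSemi_le_blochSemi_comp hβ hf)]

lemma IsDiskSelfMap.apply_zero_eq_zero_and_blochSemi_eq_one {φ : ℂ → ℂ} (hφ : IsDiskSelfMap φ)
    (hiso : IsIsometryCompOp φ) : φ 0 = 0 ∧ blochSemi φ = 1 := by
  have hc : ‖φ 0‖ < 1 := hφ.norm_lt_one (by simp)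
  have hid : ‖φ 0‖ + blochSemi φ = 1 := by
    simpa [blochNorm, blochSemi_id] using (hiso id isDiskSelfMap_id.isBlochFn).2
  -- `mobius (φ 0) ∘ φ` fixes `0`, so its Bloch norm is its seminorm, at most `1` by Schwarz–Pick.
  have hσ : ‖φ 0‖ + 1 ≤ 1 := by
    have := (hiso _ (isDiskSelfMap_mobius hc).isBlochFn).2
    rw [blochNorm, blochNorm, Function.comp_apply, mobius_self, norm_zero, zero_add,
      mobius_zero_right, blochSemi_mobius hc] at this
    exact this ▸ ((isDiskSelfMap_mobius hc).comp hφ).blochSemi_le_one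
  have h0 : φ 0 = 0 := norm_le_zero_iff.mp (by linarith)
  exact ⟨h0, by simpa [h0] using hid⟩

/-- `C_φ` is an isometry on the Bloch space of the unit disk iff `φ(0) = 0` and
`β_φ = 1`. -/
theorem isometry_iff_fixes_zero_and_blochSemi_eq_one
    (φ : ℂ → ℂ) (hmap : MapsTo φ (ball (0 : ℂ) 1) (ball (0 : ℂ) 1))
    (hφ : DifferentiableOn ℂ φ (ball (0 : ℂ) 1)) :
    IsIsometryCompOp φ ↔ (φ 0 = 0 ∧ blochSemi φ = 1) :=
  ⟨IsDiskSelfMap.apply_zero_eq_zero_and_blochSemi_eq_one ⟨hφ, hmap⟩,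
    fun ⟨h0, hβ⟩ => IsDiskSelfMap.isIsometryCompOp ⟨hφ, hmap⟩ h0 hβ⟩
end

section
/- Let z = (z_1,…,z_n) ∈ ℂⁿ satisfy |Σ_{j=1}^n z_j²|² + 1 − 2‖z‖² > 0 and |Σ_{j=1}^n z_j²| < 1 (i.e. z lies in the Cartan domain of type IV). Then for every pair of distinct indices r,s ∈ {1,…,n}, both z_r + i z_s and z_r − i z_s lie in the open unit disk 𝔻. -/
open Complex

lemma cartan_aux (p q T S A : ℝ) (hp : 0 ≤ p) (hq : 0 ≤ q) (hT : 0 ≤ T)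
    (hS0 : 0 ≤ S) (hS1 : S < 1) (hSle : S ≤ p * q + T)
    (hsum : p ^ 2 + q ^ 2 = 2 * A)
    (h1 : S ^ 2 + 1 - 2 * (A + T) > 0) : p < 1 := by
  by_contra hp1
  push_neg at hp1
  have hSsq : S ^ 2 ≤ (p * q + T) ^ 2 := by nlinarith [mul_nonneg (mul_nonneg hp hq) hT]
  have hq1 : q < 1 := by nlinarith
  have hT2 : 2 * T < 1 - q ^ 2 := by nlinarith
  have hf : (T - (1 + p) * (1 - q)) * (T - (1 - p) * (1 + q)) > 0 := by nlinarith
  have h2f : T - (1 - p) * (1 + q) ≥ 0 := by nlinarith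
  have h1f : T - (1 + p) * (1 - q) > 0 := by
    rcases mul_pos_iff.mp hf with ⟨ha, _⟩ | ⟨_, hb⟩
    · exact ha
    · nlinarith
  nlinarith [mul_pos (sub_pos.mpr hq1) (show (0:ℝ) < 1 + 2 * p - q by nlinarith)]

/-- If `z` lies in the Cartan classical domain of type IV, i.e.
`|Σ z_j²|² + 1 − 2‖z‖² > 0` and `|Σ z_j²| < 1`, then for all distinct indices
`r, s`, both `z_r + i z_s` and `z_r − i z_s` lie in the open unit disk. -/
theorem cartanIV_modified_coords_mem_disk (n : ℕ) (z : Fin n → ℂ)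
    (h1 : ‖∑ j, (z j) ^ 2‖ ^ 2 + 1 - 2 * ∑ j, ‖z j‖ ^ 2 > 0)
    (h2 : ‖∑ j, (z j) ^ 2‖ < 1) :
    ∀ r s : Fin n, r ≠ s →
      ‖z r + Complex.I * z s‖ < 1 ∧ ‖z r - Complex.I * z s‖ < 1 := by
  intro r s hrs
  set p := ‖z r + Complex.I * z s‖ with hp_def
  set q := ‖z r - Complex.I * z s‖ with hq_def
  set S := ‖∑ j, (z j) ^ 2‖ with hS_def
  set T : ℝ := ∑ j ∈ (Finset.univ \ {r, s}), ‖z j‖ ^ 2 with hT_def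
  have hrs_sub : ({r, s} : Finset (Fin n)) ⊆ Finset.univ := Finset.subset_univ _
  -- split the sums
  have hsplitC : ∑ j, (z j) ^ 2
      = (∑ j ∈ (Finset.univ \ {r, s}), (z j) ^ 2) + (z r ^ 2 + z s ^ 2) := by
    rw [← Finset.sum_sdiff hrs_sub]
    congr 1
    rw [Finset.sum_pair hrs]
  have hsplitR : ∑ j, ‖z j‖ ^ 2 = T + (‖z r‖ ^ 2 + ‖z s‖ ^ 2) := by
    rw [← Finset.sum_sdiff hrs_sub]
    congr 1
    rw [Finset.sum_pair hrs]
  have hT : 0 ≤ T := Finset.sum_nonneg fun j _ => sq_nonneg _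
  -- parallelogram
  have hsum : p ^ 2 + q ^ 2 = 2 * (‖z r‖ ^ 2 + ‖z s‖ ^ 2) := by
    have hs : ‖Complex.I * z s‖ = ‖z s‖ := by
      rw [norm_mul, Complex.norm_I, one_mul]
    rw [hp_def, hq_def, ← hs]
    have := parallelogram_law_with_norm ℂ (z r) (Complex.I * z s)
    nlinarith [this]
  -- product
  have hprod : p * q = ‖z r ^ 2 + z s ^ 2‖ := by
    rw [hp_def, hq_def, ← norm_mul]
    congr 1
    have : Complex.I * z s * (Complex.I * z s) = -(z s ^ 2) := by
      have := Complex.I_mul_I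
      ring_nf
      rw [Complex.I_sq]
      ring
    ring_nf
    rw [Complex.I_sq]
    ring
  -- S ≤ p*q + T
  have hSle : S ≤ p * q + T := by
    rw [hS_def, hsplitC, hprod]
    calc ‖(∑ j ∈ (Finset.univ \ {r, s}), (z j) ^ 2) + (z r ^ 2 + z s ^ 2)‖
        ≤ ‖∑ j ∈ (Finset.univ \ {r, s}), (z j) ^ 2‖ + ‖z r ^ 2 + z s ^ 2‖ :=
          norm_add_le _ _
      _ ≤ T + ‖z r ^ 2 + z s ^ 2‖ := by
          gcongr
          calc ‖∑ j ∈ (Finset.univ \ {r, s}), (z j) ^ 2‖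
              ≤ ∑ j ∈ (Finset.univ \ {r, s}), ‖(z j) ^ 2‖ := norm_sum_le _ _
            _ = T := by rw [hT_def]; exact Finset.sum_congr rfl fun j _ => norm_pow _ _
      _ = ‖z r ^ 2 + z s ^ 2‖ + T := by ring
  have h1' : S ^ 2 + 1 - 2 * ((‖z r‖ ^ 2 + ‖z s‖ ^ 2) + T) > 0 := by
    rw [hsplitR] at h1; linarith
  have hp0 : 0 ≤ p := norm_nonneg _
  have hq0 : 0 ≤ q := norm_nonneg _
  have hS0 : 0 ≤ S := norm_nonneg _
  constructor
  · exact cartan_aux p q T S (‖z r‖ ^ 2 + ‖z s‖ ^ 2) hp0 hq0 hT hS0 h2 hSle hsum h1'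
  · refine cartan_aux q p T S (‖z r‖ ^ 2 + ‖z s‖ ^ 2) hq0 hp0 hT hS0 h2 ?_ (by linarith) h1'
    rw [mul_comm]; exact hSle
end

section
/- Let m ≥ n ≥ 1 and let D = { Z ∈ M_{m×n}(ℂ) : I_m − ZZ* is positive definite } be the Cartan domain of type I, with Bergman metric H_Z(U,Ū) = ((m+n)/2)·Trace[(I_m − ZZ*)⁻¹ U (I_n − Z*Z)⁻¹ U*]. Fix indices q ∈ {1,…,m}, r ∈ {1,…,n} and let p : D → ℂ be the coordinate projection p(Z) = Z_{qr}. Then p maps D into the open unit disk 𝔻, and its Bloch seminorm equals the Bloch constant of D: β_p = sup_{Z∈D} sup_{U≠0} |U_{qr}| / H_Z(U,Ū)^{1/2} = √(2/(m+n)). -/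
/-!
Put `A = 1 - Z Zᴴ` and `B = 1 - Zᴴ Z`. The push-through identities `B⁻¹ = 1 + Zᴴ A⁻¹ Z` and
`A⁻¹ = 1 + Z B⁻¹ Zᴴ` show that `A⁻¹ - 1` and `B⁻¹ - 1` are positive semidefinite when `A` is
positive definite, hence `Tr (A⁻¹ U B⁻¹ Uᴴ) ≥ Tr (U Uᴴ) ≥ |U_qr|²`, i.e.
`H_Z(U,Ū) ≥ (m+n)/2 · |U_qr|²`. Equality holds at `Z = 0`, `U = E_qr`. The bound `|Z_qr| < 1`
is the positivity of the diagonal entry `(1 - Z Zᴴ)_qq = 1 - ∑ⱼ |Z_qj|²`.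
-/

open Matrix
open scoped ComplexOrder

/-- The Cartan classical domain of type I:
`{ Z ∈ M_{m×n}(ℂ) : I_m − Z Z* positive definite }`. -/
def cartanI (m n : ℕ) : Set (Matrix (Fin m) (Fin n) ℂ) :=
  {Z | ((1 : Matrix (Fin m) (Fin m) ℂ) - Z * Z.conjTranspose).PosDef}

/-- The Bergman metric of the Cartan domain of type I:
`H_Z(U,Ū) = ((m+n)/2) Tr[(I_m − ZZ*)⁻¹ U (I_n − Z*Z)⁻¹ U*]`. -/
noncomputable def cartanIMetric (m n : ℕ) (Z U : Matrix (Fin m) (Fin n) ℂ) : ℝ :=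
  ((m + n : ℝ) / 2) *
    ((((1 : Matrix (Fin m) (Fin m) ℂ) - Z * Z.conjTranspose)⁻¹ * U *
      ((1 : Matrix (Fin n) (Fin n) ℂ) - Z.conjTranspose * Z)⁻¹ *
      U.conjTranspose).trace).re

namespace Matrix

variable {𝕜 : Type*} [RCLike 𝕜] {m n : Type*} [Fintype n]

theorem norm_sq_le_re_mul_conjTranspose_apply (U : Matrix m n 𝕜) (i : m) (j : n) :
    ‖U i j‖ ^ 2 ≤ RCLike.re ((U * Uᴴ) i i) := by
  have : (U * Uᴴ) i i = ∑ k, ((‖U i k‖ ^ 2 : ℝ) : 𝕜) := by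
    simp [mul_apply, RCLike.mul_conj]
  rw [this, map_sum]
  simp only [RCLike.ofReal_re]
  exact Finset.single_le_sum (fun k _ => sq_nonneg ‖U i k‖) (Finset.mem_univ j)

theorem norm_sq_le_re_trace_mul_conjTranspose [Fintype m] (U : Matrix m n 𝕜) (i : m) (j : n) :
    ‖U i j‖ ^ 2 ≤ RCLike.re (U * Uᴴ).trace := by
  rw [trace, map_sum]
  exact (norm_sq_le_re_mul_conjTranspose_apply U i j).trans <| Finset.single_le_sum
    (fun k _ => (sq_nonneg _).trans (norm_sq_le_re_mul_conjTranspose_apply U k j))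
    (Finset.mem_univ i)

theorem PosDef.norm_apply_lt_one [Fintype m] [DecidableEq m] {Z : Matrix m n 𝕜}
    (hZ : (1 - Z * Zᴴ).PosDef) (i : m) (j : n) : ‖Z i j‖ < 1 := by
  have hdiag : RCLike.re ((Z * Zᴴ) i i) < 1 := by
    simpa using (RCLike.pos_iff.mp (hZ.diag_pos (i := i))).1
  exact (sq_lt_one_iff₀ (norm_nonneg _)).mp
    ((norm_sq_le_re_mul_conjTranspose_apply Z i j).trans_lt hdiag)

variable [Fintype m] [DecidableEq m] [DecidableEq n]

theorem inv_one_sub_mul_eq_one_add {R : Type*} [CommRing R] (Z : Matrix m n R)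
    (W : Matrix n m R) (h : IsUnit (1 - Z * W).det) :
    (1 - W * Z)⁻¹ = 1 + W * (1 - Z * W)⁻¹ * Z := by
  apply inv_eq_right_inv
  have hC := mul_nonsing_inv _ h
  set C := (1 - Z * W)⁻¹
  calc (1 - W * Z) * (1 + W * C * Z)
      = 1 - W * Z + W * ((1 - Z * W) * C) * Z := by
        simp only [Matrix.sub_mul, Matrix.mul_add, Matrix.mul_sub, Matrix.mul_assoc,
          Matrix.one_mul, Matrix.mul_one]
    _ = 1 := by rw [hC, Matrix.mul_one, sub_add_cancel]

theorem PosSemidef.trace_mul_nonneg {P X : Matrix n n 𝕜} (hP : P.PosSemidef)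
    (hX : X.PosSemidef) : 0 ≤ (P * X).trace := by
  open scoped MatrixOrder in
  obtain ⟨B, rfl⟩ := CStarAlgebra.nonneg_iff_eq_star_mul_self.mp hP.nonneg
  rw [star_eq_conjTranspose, Matrix.mul_assoc, trace_mul_comm]
  exact (hX.mul_mul_conjTranspose_same B).trace_nonneg

theorem trace_mul_conjTranspose_le_trace {P : Matrix m m 𝕜} {Q : Matrix n n 𝕜}
    (hP : (P - 1).PosSemidef) (hQ : (Q - 1).PosSemidef) (U : Matrix m n 𝕜) :
    (U * Uᴴ).trace ≤ (P * U * Q * Uᴴ).trace := by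
  have hQ' : Q.PosSemidef := by simpa using PosSemidef.one.add hQ
  calc (U * Uᴴ).trace ≤ (U * Q * Uᴴ).trace := by
        rw [← sub_nonneg, ← trace_sub]
        simpa [Matrix.mul_sub, Matrix.sub_mul] using
          (hQ.mul_mul_conjTranspose_same U).trace_nonneg
    _ ≤ (P * U * Q * Uᴴ).trace := by
        rw [← sub_nonneg, ← trace_sub]
        simpa [Matrix.mul_assoc, Matrix.sub_mul] using
          hP.trace_mul_nonneg (hQ'.mul_mul_conjTranspose_same U)

theorem posSemidef_inv_one_sub_conjTranspose_mul_sub_one {Z : Matrix m n 𝕜}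
    (hZ : (1 - Z * Zᴴ).PosDef) : ((1 - Zᴴ * Z)⁻¹ - 1).PosSemidef := by
  rw [inv_one_sub_mul_eq_one_add _ _ ((isUnit_iff_isUnit_det _).mp hZ.isUnit),
    add_sub_cancel_left]
  exact hZ.inv.posSemidef.conjTranspose_mul_mul_same Z

theorem posSemidef_inv_one_sub_mul_conjTranspose_sub_one {Z : Matrix m n 𝕜}
    (hZ : (1 - Z * Zᴴ).PosDef) : ((1 - Z * Zᴴ)⁻¹ - 1).PosSemidef := by
  have hdet : IsUnit (1 - Zᴴ * Z).det := by
    rw [det_one_sub_mul_comm]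
    exact (isUnit_iff_isUnit_det _).mp hZ.isUnit
  have hB := posSemidef_inv_one_sub_conjTranspose_mul_sub_one hZ
  rw [inv_one_sub_mul_eq_one_add Zᴴ Z hdet, add_sub_cancel_left]
  simpa using (PosSemidef.one.add hB).mul_mul_conjTranspose_same Z

end Matrix

theorem Real.div_sqrt_le_sqrt_inv {c x H : ℝ} (hc : 0 < c) (hx : 0 ≤ x) (h : c * x ^ 2 ≤ H) :
    x / √H ≤ √c⁻¹ := by
  have hH : 0 ≤ H := (by positivity : 0 ≤ c * x ^ 2).trans h
  rw [← Real.sqrt_sq hx, ← Real.sqrt_div' _ hH]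
  exact Real.sqrt_le_sqrt
    (div_le_of_le_mul₀ hH (inv_nonneg.mpr hc.le) ((le_inv_mul_iff₀ hc).mpr h))

theorem zero_mem_cartanI (m n : ℕ) : 0 ∈ cartanI m n := by
  simpa [cartanI] using PosDef.one

theorem cartanIMetric_zero_single {m n : ℕ} (q : Fin m) (r : Fin n) :
    cartanIMetric m n 0 (single q r 1) = (m + n) / 2 := by
  simp [cartanIMetric]

theorem mul_norm_sq_le_cartanIMetric {m n : ℕ} {Z : Matrix (Fin m) (Fin n) ℂ}
    (hZ : Z ∈ cartanI m n) (U : Matrix (Fin m) (Fin n) ℂ) (q : Fin m) (r : Fin n) :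
    (m + n) / 2 * ‖U q r‖ ^ 2 ≤ cartanIMetric m n Z U := by
  have hA : (1 - Z * Zᴴ).PosDef := hZ
  have htrace := Complex.le_def.mp <| trace_mul_conjTranspose_le_trace
    (posSemidef_inv_one_sub_mul_conjTranspose_sub_one hA)
    (posSemidef_inv_one_sub_conjTranspose_mul_sub_one hA) U
  exact mul_le_mul_of_nonneg_left
    ((norm_sq_le_re_trace_mul_conjTranspose U q r).trans htrace.1) (by positivity)

theorem cartanI_projection_blochSemi_general (m n : ℕ)
    (q : Fin m) (r : Fin n) :
    (∀ Z ∈ cartanI m n, ‖Z q r‖ < 1) ∧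
    sSup {t : ℝ | ∃ Z ∈ cartanI m n, ∃ U : Matrix (Fin m) (Fin n) ℂ, U ≠ 0 ∧
        t = ‖U q r‖ / Real.sqrt (cartanIMetric m n Z U)} =
      Real.sqrt (2 / (m + n)) := by
  have hc : (0 : ℝ) < (m + n) / 2 := by
    have : (0 : ℝ) < m := Nat.cast_pos.mpr q.pos
    positivity
  rw [← inv_div]
  refine ⟨fun Z hZ => PosDef.norm_apply_lt_one hZ q r, IsGreatest.csSup_eq ⟨?_, ?_⟩⟩
  · refine ⟨0, zero_mem_cartanI m n, single q r 1, fun h => by simpa using congr($h q r), ?_⟩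
    rw [cartanIMetric_zero_single, single_apply_same, norm_one, Real.sqrt_inv, one_div]
  · rintro t ⟨Z, hZ, U, -, rfl⟩
    exact Real.div_sqrt_le_sqrt_inv hc (norm_nonneg _) (mul_norm_sq_le_cartanIMetric hZ U q r)

/-- On the Cartan domain of type I (`m ≥ n ≥ 1`), each coordinate projection
`Z ↦ Z_{qr}` maps the domain into the unit disk and has Bloch seminorm
`sup_{Z ∈ D} sup_{U ≠ 0} |U_{qr}| / H_Z(U,Ū)^{1/2}` equal to the Bloch constant
`√(2/(m+n))` of the domain. -/
theorem cartanI_projection_blochSemi (m n : ℕ) (hn : 1 ≤ n) (hm : n ≤ m)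
    (q : Fin m) (r : Fin n) :
    (∀ Z ∈ cartanI m n, ‖Z q r‖ < 1) ∧
    sSup {t : ℝ | ∃ Z ∈ cartanI m n, ∃ U : Matrix (Fin m) (Fin n) ℂ, U ≠ 0 ∧
        t = ‖U q r‖ / Real.sqrt (cartanIMetric m n Z U)} =
      Real.sqrt (2 / (m + n)) :=
  cartanI_projection_blochSemi_general m n q r
end

section
/- Let φ : 𝔻ⁿ → 𝔻ⁿ be holomorphic, surjective, and not injective. Then the composition operator C_φ is not surjective on the Bloch space of 𝔻ⁿ: there exists a Bloch function g on 𝔻ⁿ such that no Bloch function f on 𝔻ⁿ satisfies f∘φ = g. -/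
open Complex Metric Set

/-- The unit polydisk `𝔻ⁿ = { z ∈ ℂⁿ : |z_k| < 1 for all k }`. -/
def polydisk (n : ℕ) : Set (Fin n → ℂ) := {z | ∀ k, ‖z k‖ < 1}

/-- The Bergman metric on the polydisk: `H_z(u,ū) = Σ_k |u_k|²/(1−|z_k|²)²`. -/
noncomputable def polyH (n : ℕ) (z u : Fin n → ℂ) : ℝ :=
  ∑ k, ‖u k‖ ^ 2 / (1 - ‖z k‖ ^ 2) ^ 2

/-- `Q_f(z) = sup_{u ≠ 0} |f'(z)u| / H_z(u,ū)^{1/2}` on the polydisk. -/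
noncomputable def Qpoly (n : ℕ) (f : (Fin n → ℂ) → ℂ) (z : Fin n → ℂ) : ℝ :=
  sSup {r : ℝ | ∃ u : Fin n → ℂ, u ≠ 0 ∧
    r = ‖fderiv ℂ f z u‖ / Real.sqrt (polyH n z u)}

/-- The set of values `Q_f(z)` for `z ∈ 𝔻ⁿ`. -/
def blochValuesPoly (n : ℕ) (f : (Fin n → ℂ) → ℂ) : Set ℝ :=
  {r : ℝ | ∃ z ∈ polydisk n, r = Qpoly n f z}

/-- The Bloch seminorm `β_f = sup_{z ∈ 𝔻ⁿ} Q_f(z)`. -/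
noncomputable def blochSemiPoly (n : ℕ) (f : (Fin n → ℂ) → ℂ) : ℝ :=
  sSup (blochValuesPoly n f)

/-- `f` is a Bloch function on the polydisk. -/
def IsBlochPoly (n : ℕ) (f : (Fin n → ℂ) → ℂ) : Prop :=
  DifferentiableOn ℂ f (polydisk n) ∧ BddAbove (blochValuesPoly n f)

/-- The Bloch norm `‖f‖_B = |f(0)| + β_f` on the polydisk. -/
noncomputable def blochNormPoly (n : ℕ) (f : (Fin n → ℂ) → ℂ) : ℝ :=
  ‖f 0‖ + blochSemiPoly n f

/-- The `k`-th coordinate function is Bloch on the polydisk. -/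
lemma isBlochPoly_coord (n : ℕ) (k : Fin n) :
    IsBlochPoly n (fun z => z k) := by
  have hderiv : ∀ z : Fin n → ℂ, fderiv ℂ (fun z : Fin n → ℂ => z k) z
      = ContinuousLinearMap.proj k := by
    intro z
    have : (fun z : Fin n → ℂ => z k)
        = (ContinuousLinearMap.proj k : (Fin n → ℂ) →L[ℂ] ℂ) := rfl
    rw [this, ContinuousLinearMap.fderiv]
  constructor
  · exact (differentiable_pi.mp differentiable_id k).differentiableOn
  · refine ⟨1, ?_⟩
    rintro r ⟨z, hz, rfl⟩
    refine Real.sSup_le ?_ zero_le_one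
    rintro r ⟨u, hu, rfl⟩
    rw [hderiv]
    have h1 : ‖(ContinuousLinearMap.proj k : (Fin n → ℂ) →L[ℂ] ℂ) u‖ = ‖u k‖ := rfl
    rw [h1]
    have hzk : ‖z k‖ < 1 := hz k
    have hpos : (0:ℝ) < 1 - ‖z k‖ ^ 2 := by nlinarith [norm_nonneg (z k)]
    have hle1 : (1 - ‖z k‖ ^ 2) ^ 2 ≤ 1 := by nlinarith [norm_nonneg (z k)]
    have hterm : ‖u k‖ ^ 2 ≤ ‖u k‖ ^ 2 / (1 - ‖z k‖ ^ 2) ^ 2 := by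
      rw [le_div_iff₀ (by positivity)]
      nlinarith [sq_nonneg (‖u k‖)]
    have hH : ‖u k‖ ^ 2 ≤ polyH n z u := by
      refine hterm.trans ?_
      exact Finset.single_le_sum (f := fun j => ‖u j‖ ^ 2 / (1 - ‖z j‖ ^ 2) ^ 2)
        (fun j _ => by positivity) (Finset.mem_univ k)
    have hsqrt : ‖u k‖ ≤ Real.sqrt (polyH n z u) := by
      have := Real.sqrt_le_sqrt hH
      rwa [Real.sqrt_sq (norm_nonneg _)] at this
    exact div_le_one_of_le₀ hsqrt (Real.sqrt_nonneg _)

/-- If `φ` is a holomorphic self-map of the polydisk that is surjective onto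
`𝔻ⁿ` but not injective, then the composition operator `C_φ` is not surjective
on the Bloch space: some Bloch function `g` is not of the form `f ∘ φ` for any
Bloch function `f`. -/
theorem compOp_not_surjective_of_surjOn_not_injOn (n : ℕ)
    (φ : (Fin n → ℂ) → Fin n → ℂ)
    (hmap : MapsTo φ (polydisk n) (polydisk n))
    (hφ : DifferentiableOn ℂ φ (polydisk n))
    (hsurj : SurjOn φ (polydisk n) (polydisk n))
    (hninj : ¬ InjOn φ (polydisk n)) :
    ∃ g : (Fin n → ℂ) → ℂ, IsBlochPoly n g ∧
      ∀ f : (Fin n → ℂ) → ℂ, IsBlochPoly n f →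
        ¬ (∀ z ∈ polydisk n, f (φ z) = g z) := by
  rw [InjOn] at hninj
  push_neg at hninj
  obtain ⟨a, ha, b, hb, hab, hne⟩ := hninj
  obtain ⟨k, hk⟩ : ∃ k, a k ≠ b k := by
    by_contra h; push_neg at h; exact hne (funext h)
  refine ⟨fun z => z k, isBlochPoly_coord n k, ?_⟩
  intro f _ hcomp
  have h1 := hcomp a ha
  have h2 := hcomp b hb
  rw [hab] at h1
  simp only [] at h1 h2; exact hk (h1.symm.trans h2)
end

section
/- Let λ_1,…,λ_n ∈ ℂ with |λ_j| = 1 and each λ_j of finite multiplicative order, let G be the finite cyclic group generated by λ_1,…,λ_n, and let φ : 𝔻ⁿ → 𝔻ⁿ be given by φ(z) = (λ_1z_1,…,λ_nz_n). Then for every μ ∈ ℂ with |μ| = 1 and μ ∉ G, and for every Bloch function g on 𝔻ⁿ, there exists a unique Bloch function f on 𝔻ⁿ satisfying f∘φ − μf = g. -/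
open Complex Metric Set

/-!
Let `m` be the lcm of the orders of the `λ_j`. The `λ_j` generate a subgroup of the `m`-th roots
of unity of exponent `m`, hence all of them, so `μ ∉ G` means exactly `μ ^ m ≠ 1`. Since `φ^m = id`,
the equation `f ∘ φ - μ f = g` is then solved by the twisted average
`f = (1 - μ^m)⁻¹ ∑_{i<m} μ^(m-1-i) g ∘ φ^i`, and the difference `d` of two solutions satisfies
`d = d ∘ φ^m = μ^m d`, so `d = 0`. The twisted average is Bloch because the Bloch functions form a
vector space invariant under the unitary rotations `z ↦ a * z`, which preserve the Bergman metric.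
-/

open Finset in
theorem Subgroup.closure_range_eq_top_of_card_le_lcm_orderOf {G ι : Type*} [Group G] [Finite G]
    [Fintype ι] (f : ι → G) (h : Nat.card G ≤ univ.lcm (orderOf ∘ f)) :
    closure (Set.range f) = ⊤ := by
  set H := closure (Set.range f)
  have hlcm_dvd : univ.lcm (orderOf ∘ f) ∣ Nat.card H := by
    refine Finset.lcm_dvd fun j _ => dvd_trans ?_ Group.exponent_dvd_nat_card
    rw [Function.comp_apply, ← Subgroup.orderOf_mk (f j) (subset_closure (Set.mem_range_self j))]
    exact Monoid.order_dvd_exponent _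
  exact eq_top_of_card_eq H <| le_antisymm (card_le_of_le le_top |>.trans_eq card_top)
    (h.trans (Nat.le_of_dvd Nat.card_pos hlcm_dvd))

open Finset in
theorem exists_prod_pow_eq_of_pow_lcm_orderOf_eq_one {K ι : Type*} [CommRing K] [IsDomain K]
    [Fintype ι] {lam : ι → K} (hlam : ∀ j, IsOfFinOrder (lam j)) {μ : K}
    (hμ : μ ^ univ.lcm (fun j => orderOf (lam j)) = 1) : ∃ k : ι → ℕ, μ = ∏ j, lam j ^ k j := by
  set m := univ.lcm fun j => orderOf (lam j)
  have : NeZero m := ⟨by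
    simp only [m, Ne, Finset.lcm_eq_zero_iff, not_exists, not_and]
    exact fun j _ => (hlam j).orderOf_pos.ne'⟩
  let r : ι → rootsOfUnity m K := fun j =>
    rootsOfUnity.mkOfPowEq (lam j) (orderOf_dvd_iff_pow_eq_one.1 (dvd_lcm (mem_univ j)))
  have hr : ∀ j, orderOf (r j) = orderOf (lam j) := fun j => by
    rw [← Subgroup.orderOf_coe, ← orderOf_units, rootsOfUnity.coe_mkOfPowEq]
  have htop : Subgroup.closure (Set.range r) = ⊤ :=
    Subgroup.closure_range_eq_top_of_card_le_lcm_orderOf r <| by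
      simpa [Function.comp_def, hr] using card_rootsOfUnity (R := K) (k := m)
  have hmem : rootsOfUnity.mkOfPowEq μ hμ ∈ Submonoid.closure (Set.range r) := by
    rw [← Subgroup.closure_toSubmonoid_of_finite, htop]
    trivial
  obtain ⟨k, hk⟩ := Submonoid.exists_of_mem_closure_range r _ hmem
  refine ⟨k, ?_⟩
  simpa [r] using congrArg (fun x : rootsOfUnity m K => ((x : Kˣ) : K)) hk

section TwistedSum

variable {α K : Type*}

noncomputable def twistedSum [Field K] (T : α → α) (μ : K) (m : ℕ) (g : α → K) : α → K :=
  fun z => (1 - μ ^ m)⁻¹ * ∑ i ∈ Finset.range m, μ ^ (m - 1 - i) * g (T^[i] z)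

theorem twistedSum_comp_sub [Field K] {T : α → α} {m : ℕ} (hT : T^[m] = id) {μ : K}
    (hμ : μ ^ m ≠ 1) (g : α → K) (z : α) :
    twistedSum T μ m g (T z) - μ * twistedSum T μ m g z = g z := by
  set a : ℕ → K := fun i => μ ^ (m - i) * g (T^[i] z)
  have hshift : ∑ i ∈ Finset.range m, μ ^ (m - 1 - i) * g (T^[i] (T z)) =
      ∑ i ∈ Finset.range m, a (i + 1) :=
    Finset.sum_congr rfl fun i _ => by rw [← Function.iterate_succ_apply, Nat.sub_sub, add_comm]
  have hmul : μ * ∑ i ∈ Finset.range m, μ ^ (m - 1 - i) * g (T^[i] z) =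
      ∑ i ∈ Finset.range m, a i := by
    rw [Finset.mul_sum]
    refine Finset.sum_congr rfl fun i hi => ?_
    rw [← mul_assoc, ← pow_succ', show m - 1 - i + 1 = m - i by grind]
  have hμ' : 1 - μ ^ m ≠ 0 := sub_ne_zero.2 hμ.symm
  simp only [twistedSum]
  rw [mul_left_comm, hshift, hmul, ← mul_sub, ← Finset.sum_sub_distrib, Finset.sum_range_sub]
  simp only [a, Nat.sub_self, hT, id, pow_zero, one_mul, Function.iterate_zero, Nat.sub_zero]
  field_simp

theorem twistedSum_mem [Field K] {T : α → α} {μ : K} {m : ℕ} {g : α → K}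
    {p : Submodule K (α → K)} (hg : ∀ i, g ∘ T^[i] ∈ p) : twistedSum T μ m g ∈ p := by
  have hsum : twistedSum T μ m g =
      (1 - μ ^ m)⁻¹ • ∑ i ∈ Finset.range m, μ ^ (m - 1 - i) • (g ∘ T^[i]) := by
    ext z
    simp [twistedSum, Finset.sum_apply]
  rw [hsum]
  exact p.smul_mem _ (p.sum_mem fun i _ => p.smul_mem _ (hg i))

theorem eqOn_of_comp_sub_mul_eq [CommRing K] [NoZeroDivisors K] {s : Set α} {T : α → α}
    (hTs : Set.MapsTo T s s) {m : ℕ} (hT : T^[m] = id) {μ : K} (hμ : μ ^ m ≠ 1)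
    {g f₁ f₂ : α → K} (h₁ : ∀ z ∈ s, f₁ (T z) - μ * f₁ z = g z)
    (h₂ : ∀ z ∈ s, f₂ (T z) - μ * f₂ z = g z) : Set.EqOn f₁ f₂ s := by
  intro z hz
  have hiter : ∀ i, f₁ (T^[i] z) - f₂ (T^[i] z) = μ ^ i * (f₁ z - f₂ z) := by
    intro i
    induction i with
    | zero => simp
    | succ i ih =>
      have hi := hTs.iterate i hz
      rw [Function.iterate_succ_apply']
      linear_combination h₁ _ hi - h₂ _ hi + μ * ih
  have hfix : (1 - μ ^ m) * (f₁ z - f₂ z) = 0 := by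
    linear_combination (by simpa [hT] using hiter m : f₁ z - f₂ z = μ ^ m * (f₁ z - f₂ z))
  exact sub_eq_zero.1 ((mul_eq_zero.1 hfix).resolve_left (sub_ne_zero.2 hμ.symm))

end TwistedSum

section Polydisk

variable {n : ℕ}

theorem isOpen_polydisk (n : ℕ) : IsOpen (polydisk n) := by
  simpa only [polydisk, ofPred_forall] using
    isOpen_iInter_of_finite fun k : Fin n => isOpen_lt (by fun_prop) continuous_const

theorem norm_le_sqrt_polyH {z : Fin n → ℂ} (hz : z ∈ polydisk n) (u : Fin n → ℂ) :
    ‖u‖ ≤ √(polyH n z u) := by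
  refine (pi_norm_le_iff_of_nonneg (Real.sqrt_nonneg _)).2 fun k => Real.le_sqrt_of_sq_le ?_
  have hzk : 0 < 1 - ‖z k‖ ^ 2 := by nlinarith [hz k, norm_nonneg (z k)]
  calc ‖u k‖ ^ 2 ≤ ‖u k‖ ^ 2 / (1 - ‖z k‖ ^ 2) ^ 2 :=
        le_div_self (by positivity) (by positivity) (by nlinarith [norm_nonneg (z k)])
    _ ≤ polyH n z u :=
        Finset.single_le_sum (f := fun k => ‖u k‖ ^ 2 / (1 - ‖z k‖ ^ 2) ^ 2)
          (fun _ _ => by positivity) (Finset.mem_univ k)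

theorem mul_mem_polydisk {a z : Fin n → ℂ} (ha : ∀ j, ‖a j‖ = 1) (hz : z ∈ polydisk n) :
    a * z ∈ polydisk n := fun j => by simpa [norm_mul, ha j] using hz j

theorem polyH_mul_mul {a : Fin n → ℂ} (ha : ∀ j, ‖a j‖ = 1) (z u : Fin n → ℂ) :
    polyH n (a * z) (a * u) = polyH n z u := by
  simp [polyH, ha]

end Polydisk

section Bloch

variable {n : ℕ} {f g : (Fin n → ℂ) → ℂ}

theorem div_sqrt_polyH_le_Qpoly (f : (Fin n → ℂ) → ℂ) {z u : Fin n → ℂ} (hz : z ∈ polydisk n)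
    (hu : u ≠ 0) : ‖fderiv ℂ f z u‖ / √(polyH n z u) ≤ Qpoly n f z := by
  refine le_csSup ⟨‖fderiv ℂ f z‖, ?_⟩ ⟨u, hu, rfl⟩
  rintro r ⟨v, -, rfl⟩
  exact div_le_of_le_mul₀ (Real.sqrt_nonneg _) (norm_nonneg _)
    ((fderiv ℂ f z).le_opNorm v |>.trans (by gcongr; exact norm_le_sqrt_polyH hz v))

theorem isBlochPoly_iff : IsBlochPoly n f ↔ DifferentiableOn ℂ f (polydisk n) ∧
    ∃ M, ∀ z ∈ polydisk n, ∀ u, ‖fderiv ℂ f z u‖ ≤ M * √(polyH n z u) := by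
  refine and_congr_right fun _ => ⟨fun ⟨M, hM⟩ => ⟨M, fun z hz u => ?_⟩, fun ⟨M, hM⟩ => ?_⟩
  · rcases eq_or_ne u 0 with rfl | hu
    · simp [polyH]
    have hH : 0 < √(polyH n z u) := (norm_pos_iff.2 hu).trans_le (norm_le_sqrt_polyH hz u)
    rw [← div_le_iff₀ hH]
    exact (div_sqrt_polyH_le_Qpoly f hz hu).trans (hM ⟨z, hz, rfl⟩)
  · refine ⟨max M 0, ?_⟩
    rintro _ ⟨z, hz, rfl⟩
    refine Real.sSup_le ?_ (le_max_right M 0)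
    rintro _ ⟨u, -, rfl⟩
    exact div_le_of_le_mul₀ (Real.sqrt_nonneg _) (le_max_right M 0)
      ((hM z hz u).trans (by gcongr; exact le_max_left M 0))

theorem IsBlochPoly.add (hf : IsBlochPoly n f) (hg : IsBlochPoly n g) :
    IsBlochPoly n (f + g) := by
  obtain ⟨hfd, Mf, hMf⟩ := isBlochPoly_iff.1 hf
  obtain ⟨hgd, Mg, hMg⟩ := isBlochPoly_iff.1 hg
  refine isBlochPoly_iff.2 ⟨hfd.add hgd, Mf + Mg, fun z hz u => ?_⟩
  have hnhds := (isOpen_polydisk n).mem_nhds hz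
  rw [fderiv_add (hfd.differentiableAt hnhds) (hgd.differentiableAt hnhds),
    add_apply, add_mul]
  exact (norm_add_le _ _).trans (add_le_add (hMf z hz u) (hMg z hz u))

theorem IsBlochPoly.const_smul (c : ℂ) (hf : IsBlochPoly n f) : IsBlochPoly n (c • f) := by
  obtain ⟨hfd, M, hM⟩ := isBlochPoly_iff.1 hf
  refine isBlochPoly_iff.2 ⟨hfd.const_smul c, ‖c‖ * M, fun z hz u => ?_⟩
  rw [fderiv_const_smul (hfd.differentiableAt ((isOpen_polydisk n).mem_nhds hz)),
    smul_apply, norm_smul, mul_assoc]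
  exact mul_le_mul_of_nonneg_left (hM z hz u) (norm_nonneg c)

theorem IsBlochPoly.comp_mul_left {a : Fin n → ℂ} (ha : ∀ j, ‖a j‖ = 1)
    (hg : IsBlochPoly n g) : IsBlochPoly n (g ∘ (a * ·)) := by
  obtain ⟨hgd, M, hM⟩ := isBlochPoly_iff.1 hg
  let L := ContinuousLinearMap.mul ℂ (Fin n → ℂ) a
  have hderiv : ∀ z ∈ polydisk n, HasFDerivAt (g ∘ (a * ·)) ((fderiv ℂ g (a * z)).comp L) z :=
    fun z hz => (hgd.differentiableAt ((isOpen_polydisk n).mem_nhds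
      (mul_mem_polydisk ha hz))).hasFDerivAt.comp z L.hasFDerivAt
  refine isBlochPoly_iff.2 ⟨fun z hz => (hderiv z hz).differentiableAt.differentiableWithinAt,
    M, fun z hz u => ?_⟩
  rw [(hderiv z hz).fderiv, ← polyH_mul_mul ha z u]
  exact hM _ (mul_mem_polydisk ha hz) _

variable (n) in
def blochSpace : Submodule ℂ ((Fin n → ℂ) → ℂ) where
  carrier := {f | IsBlochPoly n f}
  zero_mem' := isBlochPoly_iff.2 ⟨differentiableOn_const 0, 0, by simp⟩
  add_mem' := IsBlochPoly.add
  smul_mem' c _ := IsBlochPoly.const_smul c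

end Bloch

theorem resolvent_of_diagonal_rotation_symbol_general (n : ℕ) (lam : Fin n → ℂ)
    (hmod : ∀ j, ‖lam j‖ = 1)
    (hord : ∀ j, ∃ k : ℕ, 0 < k ∧ lam j ^ k = 1)
    (φ : (Fin n → ℂ) → Fin n → ℂ)
    (hφ : ∀ z : Fin n → ℂ, ∀ j, φ z j = lam j * z j)
    (μ : ℂ)
    (hμG : ¬ ∃ k : Fin n → ℕ, μ = ∏ j, lam j ^ k j) :
    ∀ g : (Fin n → ℂ) → ℂ, IsBlochPoly n g →
      (∃ f : (Fin n → ℂ) → ℂ, IsBlochPoly n f ∧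
        ∀ z ∈ polydisk n, f (φ z) - μ * f z = g z) ∧
      (∀ f₁ f₂ : (Fin n → ℂ) → ℂ, IsBlochPoly n f₁ → IsBlochPoly n f₂ →
        (∀ z ∈ polydisk n, f₁ (φ z) - μ * f₁ z = g z) →
        (∀ z ∈ polydisk n, f₂ (φ z) - μ * f₂ z = g z) →
        EqOn f₁ f₂ (polydisk n)) := by
  intro g hg
  set m := Finset.univ.lcm fun j => orderOf (lam j)
  have hφ_eq : φ = (lam * ·) := funext fun z => funext (hφ z)
  have hφ_iterate : ∀ i, φ^[i] = (lam ^ i * ·) := by rw [hφ_eq]; exact mul_left_iterate lam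
  have hlam_pow : ∀ j, lam j ^ m = 1 := fun j =>
    orderOf_dvd_iff_pow_eq_one.1 (Finset.dvd_lcm (Finset.mem_univ j))
  have hφm : φ^[m] = id := by
    rw [hφ_iterate]
    ext z j
    simp [hlam_pow j]
  have hμm : μ ^ m ≠ 1 := fun h => hμG <| exists_prod_pow_eq_of_pow_lcm_orderOf_eq_one
    (fun j => isOfFinOrder_iff_pow_eq_one.2 (hord j)) h
  have hmaps : MapsTo φ (polydisk n) (polydisk n) := fun z hz => hφ_eq ▸ mul_mem_polydisk hmod hz
  refine ⟨⟨twistedSum φ μ m g, twistedSum_mem (p := blochSpace n) fun i => ?_,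
    fun z _ => twistedSum_comp_sub hφm hμm g z⟩,
    fun f₁ f₂ _ _ => eqOn_of_comp_sub_mul_eq hmaps hφm hμm⟩
  rw [hφ_iterate]
  exact hg.comp_mul_left fun j => by simp [hmod j]

/-- Let `λ_1, …, λ_n` be unimodular complex numbers of finite order, let `G` be
the (finite cyclic) group they generate, and let `φ(z) = (λ_1 z_1, …, λ_n z_n)`.
For every unimodular `μ ∉ G` and every Bloch function `g` on `𝔻ⁿ`, there is a
Bloch function `f`, unique on `𝔻ⁿ`, with `f ∘ φ − μ f = g`. -/
theorem resolvent_of_diagonal_rotation_symbol (n : ℕ) (lam : Fin n → ℂ)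
    (hmod : ∀ j, ‖lam j‖ = 1)
    (hord : ∀ j, ∃ k : ℕ, 0 < k ∧ lam j ^ k = 1)
    (φ : (Fin n → ℂ) → Fin n → ℂ)
    (hφ : ∀ z : Fin n → ℂ, ∀ j, φ z j = lam j * z j)
    (μ : ℂ) (hμ : ‖μ‖ = 1)
    (hμG : ¬ ∃ k : Fin n → ℕ, μ = ∏ j, lam j ^ k j) :
    ∀ g : (Fin n → ℂ) → ℂ, IsBlochPoly n g →
      (∃ f : (Fin n → ℂ) → ℂ, IsBlochPoly n f ∧
        ∀ z ∈ polydisk n, f (φ z) - μ * f z = g z) ∧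
      (∀ f₁ f₂ : (Fin n → ℂ) → ℂ, IsBlochPoly n f₁ → IsBlochPoly n f₂ →
        (∀ z ∈ polydisk n, f₁ (φ z) - μ * f₁ z = g z) →
        (∀ z ∈ polydisk n, f₂ (φ z) - μ * f₂ z = g z) →
        EqOn f₁ f₂ (polydisk n)) :=
  resolvent_of_diagonal_rotation_symbol_general n lam hmod hord φ hφ μ hμG
end
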